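/- arXiv:1911.13246 — 2 statements merged into one kernel-verified Lean document; each statement's English description precedes it below -/
import Mathlib

section
/- (Lions–Lax–Milgram variational existence.) Let H and V be real Hilbert spaces and j : V → H an injective bounded linear map (continuous embedding). Let B : H × V → ℝ be a bilinear map and let M > 0, c > 0 be such that |B(ψ, v)| ≤ M ‖ψ‖_H ‖v‖_V for all ψ ∈ H, v ∈ V, and B(j(v), v) ≥ c ‖j(v)‖²_H for all v ∈ V. Then for every bounded linear functional F : H → ℝ there exists ψ ∈ H such that B(ψ, v) = F(j(v)) for all v ∈ V. -/
/-!
By Riesz, `B(·, v) = ⟪T v, ·⟫` for a linear `T : V → H`, and coercivity gives `c ‖j v‖ ≤ ‖T v‖`.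
Hence `T v ↦ F (j v)` is a well-defined functional on `range T`, bounded by `‖F‖ / c`; extend it
to `H` by Hahn–Banach and represent the extension by Riesz as `⟪ψ, ·⟫`.
-/

open InnerProductSpace

theorem LinearMap.exists_strongDual_comp_eq_of_norm_le {𝕜 E F : Type*} [RCLike 𝕜]
    [AddCommGroup E] [Module 𝕜 E] [NormedAddCommGroup F] [NormedSpace 𝕜 F]
    (T : E →ₗ[𝕜] F) (φ : E →ₗ[𝕜] 𝕜) (C : ℝ) (hφ : ∀ v, ‖φ v‖ ≤ C * ‖T v‖) :
    ∃ g : StrongDual 𝕜 F, ∀ v, g (T v) = φ v := by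
  have hker : LinearMap.ker T ≤ LinearMap.ker φ := fun v hv => by
    simpa [LinearMap.mem_ker.mp hv] using hφ v
  set f₀ : LinearMap.range T →ₗ[𝕜] 𝕜 :=
    (LinearMap.ker T).liftQ φ hker ∘ₗ T.quotKerEquivRange.symm.toLinearMap
  have hf₀ : ∀ v, f₀ ⟨T v, LinearMap.mem_range_self T v⟩ = φ v := fun v => by
    simp [f₀, LinearMap.quotKerEquivRange_symm_apply_image]
  have hf₀_bound : ∀ x, ‖f₀ x‖ ≤ C * ‖x‖ := by
    rintro ⟨_, v, rfl⟩
    simpa [hf₀] using hφ v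
  obtain ⟨g, hg, -⟩ := exists_extension_norm_eq _ (f₀.mkContinuous C hf₀_bound)
  exact ⟨g, fun v => (hg _).trans (hf₀ v)⟩

theorem exists_linearMap_inner_eq_of_continuous {H V : Type*}
    [NormedAddCommGroup H] [InnerProductSpace ℝ H] [CompleteSpace H] [AddCommGroup V] [Module ℝ V]
    (B : H →ₗ[ℝ] V →ₗ[ℝ] ℝ) (hB : ∀ v, Continuous (B.flip v)) :
    ∃ T : V →ₗ[ℝ] H, ∀ v ψ, ⟪T v, ψ⟫_ℝ = B ψ v := by
  let T : V → H := fun v => (toDual ℝ H).symm ⟨B.flip v, hB v⟩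
  have hT : ∀ v ψ, ⟪T v, ψ⟫_ℝ = B ψ v := fun v ψ => toDual_symm_apply
  refine ⟨{ toFun := T, map_add' := ?_, map_smul' := ?_ }, hT⟩
  · intro v w
    refine ext_inner_right ℝ fun ψ => ?_
    simp [inner_add_left, hT]
  · intro a v
    refine ext_inner_right ℝ fun ψ => ?_
    simp [real_inner_smul_left, hT]

theorem mul_norm_le_norm_of_mul_sq_le_inner {H : Type*} [NormedAddCommGroup H]
    [InnerProductSpace ℝ H] {c : ℝ} {x y : H} (h : c * ‖x‖ ^ 2 ≤ ⟪y, x⟫_ℝ) :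
    c * ‖x‖ ≤ ‖y‖ := by
  rcases eq_or_ne x 0 with rfl | hx
  · simp
  have hx' : 0 < ‖x‖ := norm_pos_iff.mpr hx
  have : c * ‖x‖ * ‖x‖ ≤ ‖y‖ * ‖x‖ :=
    calc c * ‖x‖ * ‖x‖ = c * ‖x‖ ^ 2 := by ring
      _ ≤ ⟪y, x⟫_ℝ := h
      _ ≤ ‖y‖ * ‖x‖ := real_inner_le_norm y x
  exact le_of_mul_le_mul_right this hx'

theorem lions_lax_milgram_existence_general
    {H V : Type*}
    [NormedAddCommGroup H] [InnerProductSpace ℝ H] [CompleteSpace H]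
    [NormedAddCommGroup V] [InnerProductSpace ℝ V]
    (j : V →L[ℝ] H)
    (B : H →ₗ[ℝ] V →ₗ[ℝ] ℝ) (M c : ℝ) (hc : 0 < c)
    (hB_bdd : ∀ (ψ : H) (v : V), |B ψ v| ≤ M * ‖ψ‖ * ‖v‖)
    (hB_coer : ∀ v : V, c * ‖j v‖ ^ 2 ≤ B (j v) v)
    (F : H →L[ℝ] ℝ) :
    ∃ ψ : H, ∀ v : V, B ψ v = F (j v) := by
  obtain ⟨T, hT⟩ := exists_linearMap_inner_eq_of_continuous B fun v =>
    AddMonoidHomClass.continuous_of_bound (B.flip v) (M * ‖v‖) fun ψ => by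
      simpa [mul_right_comm] using hB_bdd ψ v
  have hT_below : ∀ v, c * ‖j v‖ ≤ ‖T v‖ := fun v =>
    mul_norm_le_norm_of_mul_sq_le_inner ((hT v (j v)).symm ▸ hB_coer v)
  obtain ⟨g, hg⟩ := T.exists_strongDual_comp_eq_of_norm_le (F ∘L j).toLinearMap (‖F‖ / c)
    fun v => calc ‖F (j v)‖ ≤ ‖F‖ * ‖j v‖ := F.le_opNorm (j v)
      _ ≤ ‖F‖ * (‖T v‖ / c) := by gcongr; rw [le_div_iff₀ hc]; linarith [hT_below v]
      _ = ‖F‖ / c * ‖T v‖ := by ring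
  refine ⟨(toDual ℝ H).symm g, fun v => ?_⟩
  rw [← hT, real_inner_comm, toDual_symm_apply, hg]
  rfl

/-- Lions–Lax–Milgram variational existence: given a continuous embedding
`j : V → H`, a bilinear form `B` bounded on `H × V` and coercive along `j`,
every bounded linear functional `F` on `H` admits `ψ ∈ H` with
`B(ψ, v) = F(j v)` for all `v ∈ V`. -/
theorem lions_lax_milgram_existence
    {H V : Type*}
    [NormedAddCommGroup H] [InnerProductSpace ℝ H] [CompleteSpace H]
    [NormedAddCommGroup V] [InnerProductSpace ℝ V] [CompleteSpace V]
    (j : V →L[ℝ] H) (hj : Function.Injective j)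
    (B : H →ₗ[ℝ] V →ₗ[ℝ] ℝ) (M c : ℝ) (hM : 0 < M) (hc : 0 < c)
    (hB_bdd : ∀ (ψ : H) (v : V), |B ψ v| ≤ M * ‖ψ‖ * ‖v‖)
    (hB_coer : ∀ v : V, c * ‖j v‖ ^ 2 ≤ B (j v) v)
    (F : H →L[ℝ] ℝ) :
    ∃ ψ : H, ∀ v : V, B ψ v = F (j v) :=
  lions_lax_milgram_existence_general j B M c hc hB_bdd hB_coer F
end

section
/- Let (Y, μ) be a σ-finite measure space, c > 0, and let g, h ∈ L²(Y, μ) be real-valued with g ≥ 0 μ-a.e. Assume that ∫ (c·g − h) w dμ ≥ 0 for every w ∈ L²(Y, μ) with w ≥ 0 μ-a.e., and that ∫ (c·g − h) g dμ = 0. Then g = (1/c) · max(h, 0) μ-a.e. -/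
open MeasureTheory

/-! Write `φ = c g − h`. Testing the variational inequality against the negative part `φ⁻ ∈ L²`
gives `−∫ (φ⁻)² ≥ 0`, so `φ ≥ 0` a.e. Then `φ g ≥ 0` a.e. has integral zero, hence vanishes a.e.,
and the pointwise complementarity `c g ≥ 0`, `c g ≥ h`, `(c g − h) c g = 0` forces `c g = h₊`. -/

theorem ae_nonneg_of_forall_integral_mul_nonneg {α : Type*} [MeasurableSpace α]
    {μ : Measure α} {φ : α → ℝ} (hφ : MemLp φ 2 μ)
    (h : ∀ w : α → ℝ, MemLp w 2 μ → 0 ≤ᵐ[μ] w → 0 ≤ ∫ x, φ x * w x ∂μ) :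
    0 ≤ᵐ[μ] φ := by
  set w : α → ℝ := fun x => max (-φ x) 0
  have hw : MemLp w 2 μ := hφ.neg_part
  have hφw : ∀ x, φ x * w x = -(w x ^ 2) := fun x => by
    rcases le_total 0 (φ x) with hx | hx
    · simp [w, hx]
    · simp only [w, max_eq_left (neg_nonneg.mpr hx)]
      ring
  have hw_sq : ∫ x, w x ^ 2 ∂μ = 0 := by
    have hneg := h w hw (ae_of_all _ fun x => le_max_right _ _)
    simp only [hφw, integral_neg] at hneg
    exact le_antisymm (by linarith) (integral_nonneg fun x => sq_nonneg _)
  filter_upwards [(integral_eq_zero_iff_of_nonneg (fun x => sq_nonneg (w x))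
    hw.integrable_sq).mp hw_sq] with x hx
  have hwx : max (-φ x) 0 = 0 := pow_eq_zero_iff two_ne_zero |>.mp hx
  simpa using hwx

theorem eq_max_zero_of_complementarity {a b : ℝ} (ha : 0 ≤ a) (hba : b ≤ a)
    (h : (a - b) * a = 0) : a = max b 0 := by
  rcases mul_eq_zero.mp h with hab | ha0
  · rw [max_eq_left (by linarith), sub_eq_zero.mp hab]
  · rw [ha0, max_eq_right (by linarith)]

theorem complementarity_optimal_control_general
    {Y : Type*} [MeasurableSpace Y] (μ : Measure Y)
    (c : ℝ) (hc : 0 < c) (g h : Y → ℝ)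
    (hg : MemLp g 2 μ) (hh : MemLp h 2 μ)
    (hg_nonneg : 0 ≤ᵐ[μ] g)
    (hvar : ∀ w : Y → ℝ, MemLp w 2 μ → 0 ≤ᵐ[μ] w →
      0 ≤ ∫ y, (c * g y - h y) * w y ∂μ)
    (hcomp : ∫ y, (c * g y - h y) * g y ∂μ = 0) :
    g =ᵐ[μ] fun y => (1 / c) * max (h y) 0 := by
  have hφ : MemLp (fun y => c * g y - h y) 2 μ := (hg.const_mul c).sub hh
  have hφ_nonneg := ae_nonneg_of_forall_integral_mul_nonneg hφ hvar
  have hprod : (fun y => (c * g y - h y) * g y) =ᵐ[μ] 0 := by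
    refine (integral_eq_zero_iff_of_nonneg_ae ?_ (hφ.integrable_mul hg)).mp hcomp
    filter_upwards [hφ_nonneg, hg_nonneg] with y hφy hgy
    exact mul_nonneg hφy hgy
  filter_upwards [hφ_nonneg, hg_nonneg, hprod] with y hφy hgy hy
  have hcg := eq_max_zero_of_complementarity (mul_nonneg hc.le hgy) (sub_nonneg.mp hφy)
    (by rw [mul_left_comm, hy, Pi.zero_apply, mul_zero])
  rw [← hcg]
  field_simp

/-- The complementarity step identifying the optimal control: if `g ≥ 0`,
`∫ (c g − h) w ≥ 0` for every nonnegative `w ∈ L²`, and `∫ (c g − h) g = 0`,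
then `g = (1/c) h₊` a.e. (equations (v16)–(v17a)). -/
theorem complementarity_optimal_control
    {Y : Type*} [MeasurableSpace Y] (μ : Measure Y) [SigmaFinite μ]
    (c : ℝ) (hc : 0 < c) (g h : Y → ℝ)
    (hg : MemLp g 2 μ) (hh : MemLp h 2 μ)
    (hg_nonneg : 0 ≤ᵐ[μ] g)
    (hvar : ∀ w : Y → ℝ, MemLp w 2 μ → 0 ≤ᵐ[μ] w →
      0 ≤ ∫ y, (c * g y - h y) * w y ∂μ)
    (hcomp : ∫ y, (c * g y - h y) * g y ∂μ = 0) :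
    g =ᵐ[μ] fun y => (1 / c) * max (h y) 0 :=
  complementarity_optimal_control_general μ c hc g h hg hh hg_nonneg hvar hcomp
end
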